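/- Let F be a CNF formula containing the grid product L ⋈ Γ := {γ ∪ {ℓ} : ℓ ∈ L, γ ∈ Γ} for a clause L and a set of clauses Γ, where no clause of Γ or unit of L contains the fresh variable y. Let F' := (F \ (L ⋈ Γ)) ∪ {¬y ∨ ℓ : ℓ ∈ L} ∪ {y ∨ γ : γ ∈ Γ}. Then F is satisfiable if and only if F' is satisfiable. -/

import Mathlib

/-!
Given a model `τ` of `F`, set `y` true if `τ` satisfies every literal of `L` and false
otherwise. In the second case some `ℓ₀ ∈ L` is false, so each `γ ∈ Γ` is satisfied because
`γ ∪ {ℓ₀}` is a clause of `F`. Conversely, each grid clause `γ ∪ {ℓ}` is the resolvent on `y`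
of `¬y ∨ ℓ` and `y ∨ γ`.
-/

namespace BVA

variable {V : Type*}

def Sat (τ : V → Bool) (C : Set (V × Bool)) : Prop :=
  ∃ l ∈ C, τ l.1 = l.2

def Satisfiable (F : Set (Set (V × Bool))) : Prop :=
  ∃ τ : V → Bool, ∀ C ∈ F, Sat τ C

def gridProduct (L : Set (V × Bool)) (Γ : Set (Set (V × Bool))) : Set (Set (V × Bool)) :=
  {D | ∃ ℓ ∈ L, ∃ γ ∈ Γ, D = insert ℓ γ}

def bvaStep (F : Set (Set (V × Bool))) (L : Set (V × Bool)) (Γ : Set (Set (V × Bool))) (y : V) :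
    Set (Set (V × Bool)) :=
  (F \ gridProduct L Γ) ∪ {C | ∃ ℓ ∈ L, C = {(y, false), ℓ}} ∪
    {C | ∃ γ ∈ Γ, C = insert (y, true) γ}

section Sat

variable {τ : V → Bool} {C D : Set (V × Bool)}

theorem Sat.mono (h : Sat τ C) (hCD : C ⊆ D) : Sat τ D :=
  let ⟨l, hl, hτl⟩ := h
  ⟨l, hCD hl, hτl⟩

theorem Sat.of_insert_of_ne {ℓ : V × Bool} (h : Sat τ (insert ℓ C)) (hℓ : τ ℓ.1 ≠ ℓ.2) :
    Sat τ C := by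
  obtain ⟨l, rfl | hl, hτl⟩ := h
  · exact absurd hτl hℓ
  · exact ⟨l, hl, hτl⟩

theorem Sat.update_of_fresh [DecidableEq V] {y : V} (h : Sat τ C) (hy : ∀ b, (y, b) ∉ C)
    (b : Bool) : Sat (Function.update τ y b) C := by
  obtain ⟨l, hl, hτl⟩ := h
  have hne : l.1 ≠ y := fun e => hy l.2 (e ▸ hl)
  exact ⟨l, hl, by rwa [Function.update_of_ne hne]⟩

theorem Sat.insert_of_resolvents {y : V} {ℓ : V × Bool} (hneg : Sat τ {(y, false), ℓ})
    (hpos : Sat τ (insert (y, true) C)) : Sat τ (insert ℓ C) := by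
  cases hy : τ y
  · exact (hpos.of_insert_of_ne (by simp [hy])).mono (Set.subset_insert ℓ C)
  · exact (hneg.of_insert_of_ne (by simp [hy])).mono (by simp)

end Sat

section Step

variable [DecidableEq V] {F : Set (Set (V × Bool))} {L : Set (V × Bool)}
  {Γ : Set (Set (V × Bool))} {y : V} {τ : V → Bool}

theorem sat_bvaStep_update_true (hyF : ∀ C ∈ F, ∀ b, (y, b) ∉ C) (hyL : ∀ b, (y, b) ∉ L)
    (hτ : ∀ C ∈ F, Sat τ C) (hL : ∀ ℓ ∈ L, τ ℓ.1 = ℓ.2) :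
    ∀ C ∈ bvaStep F L Γ y, Sat (Function.update τ y true) C := by
  rintro C ((⟨hC, -⟩ | ⟨ℓ, hℓ, rfl⟩) | ⟨γ, -, rfl⟩)
  · exact (hτ C hC).update_of_fresh (hyF C hC) true
  · have hne : ℓ.1 ≠ y := fun e => hyL ℓ.2 (e ▸ hℓ)
    exact ⟨ℓ, by simp, by rw [Function.update_of_ne hne, hL ℓ hℓ]⟩
  · exact ⟨(y, true), Set.mem_insert _ _, Function.update_self y true τ⟩

theorem sat_bvaStep_update_false (hsub : gridProduct L Γ ⊆ F)
    (hyF : ∀ C ∈ F, ∀ b, (y, b) ∉ C) (hτ : ∀ C ∈ F, Sat τ C) {ℓ₀ : V × Bool} (hℓ₀ : ℓ₀ ∈ L)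
    (hτℓ₀ : τ ℓ₀.1 ≠ ℓ₀.2) :
    ∀ C ∈ bvaStep F L Γ y, Sat (Function.update τ y false) C := by
  rintro C ((⟨hC, -⟩ | ⟨ℓ, -, rfl⟩) | ⟨γ, hγ, rfl⟩)
  · exact (hτ C hC).update_of_fresh (hyF C hC) false
  · exact ⟨(y, false), Set.mem_insert _ _, Function.update_self y false τ⟩
  · have hgrid : insert ℓ₀ γ ∈ F := hsub ⟨ℓ₀, hℓ₀, γ, hγ, rfl⟩
    have hγfresh : ∀ b, (y, b) ∉ γ := fun b hb => hyF _ hgrid b (Set.mem_insert_of_mem _ hb)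
    exact (((hτ _ hgrid).of_insert_of_ne hτℓ₀).update_of_fresh hγfresh false).mono
      (Set.subset_insert _ γ)

end Step

variable {F : Set (Set (V × Bool))} {L : Set (V × Bool)} {Γ : Set (Set (V × Bool))} {y : V}

theorem satisfiable_bvaStep (hsub : gridProduct L Γ ⊆ F) (hyF : ∀ C ∈ F, ∀ b, (y, b) ∉ C)
    (hyL : ∀ b, (y, b) ∉ L) (h : Satisfiable F) : Satisfiable (bvaStep F L Γ y) := by
  classical
  obtain ⟨τ, hτ⟩ := h
  by_cases hL : ∀ ℓ ∈ L, τ ℓ.1 = ℓ.2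
  · exact ⟨_, sat_bvaStep_update_true hyF hyL hτ hL⟩
  · push Not at hL
    obtain ⟨ℓ₀, hℓ₀, hτℓ₀⟩ := hL
    exact ⟨_, sat_bvaStep_update_false hsub hyF hτ hℓ₀ hτℓ₀⟩

theorem satisfiable_of_bvaStep (h : Satisfiable (bvaStep F L Γ y)) : Satisfiable F := by
  obtain ⟨τ, hτ⟩ := h
  refine ⟨τ, fun C hC => ?_⟩
  by_cases hgrid : C ∈ gridProduct L Γ
  · obtain ⟨ℓ, hℓ, γ, hγ, rfl⟩ := hgrid
    exact (hτ _ (Or.inl (Or.inr ⟨ℓ, hℓ, rfl⟩))).insert_of_resolvents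
      (hτ _ (Or.inr ⟨γ, hγ, rfl⟩))
  · exact hτ C (Or.inl (Or.inl ⟨hC, hgrid⟩))

end BVA

theorem stmt_13_general {V : Type*} (F : Set (Set (V × Bool))) (L : Set (V × Bool))
    (Γ : Set (Set (V × Bool))) (y : V)
    (hsub : {D | ∃ ℓ ∈ L, ∃ γ ∈ Γ, D = insert ℓ γ} ⊆ F)
    (hyF : ∀ C ∈ F, ∀ b : Bool, (y, b) ∉ C)
    (hyL : ∀ b : Bool, (y, b) ∉ L) :
    (∃ τ : V → Bool, ∀ C ∈ F, ∃ l ∈ C, τ l.1 = l.2) ↔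
      (∃ τ : V → Bool, ∀ C ∈
          (F \ {D | ∃ ℓ ∈ L, ∃ γ ∈ Γ, D = insert ℓ γ}) ∪
            {C | ∃ ℓ ∈ L, C = {(y, false), ℓ}} ∪
            {C | ∃ γ ∈ Γ, C = insert (y, true) γ},
        ∃ l ∈ C, τ l.1 = l.2) :=
  ⟨BVA.satisfiable_bvaStep hsub hyF hyL, BVA.satisfiable_of_bvaStep⟩

/-- Soundness of one BVA step: replacing a grid product `L ⋈ Γ` inside `F` by the
clauses `¬y ∨ ℓ` (`ℓ ∈ L`) and `y ∨ γ` (`γ ∈ Γ`), where `y` is a fresh variable,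
preserves satisfiability. A literal is a pair `(v, polarity)`; an assignment `τ`
satisfies a clause if it satisfies some literal of it. -/
theorem stmt_13 {V : Type*} (F : Set (Set (V × Bool))) (L : Set (V × Bool))
    (Γ : Set (Set (V × Bool))) (y : V)
    (hsub : {D | ∃ ℓ ∈ L, ∃ γ ∈ Γ, D = insert ℓ γ} ⊆ F)
    (hyF : ∀ C ∈ F, ∀ b : Bool, (y, b) ∉ C)
    (hyL : ∀ b : Bool, (y, b) ∉ L)
    (hyΓ : ∀ γ ∈ Γ, ∀ b : Bool, (y, b) ∉ γ) :
    (∃ τ : V → Bool, ∀ C ∈ F, ∃ l ∈ C, τ l.1 = l.2) ↔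
      (∃ τ : V → Bool, ∀ C ∈
          (F \ {D | ∃ ℓ ∈ L, ∃ γ ∈ Γ, D = insert ℓ γ}) ∪
            {C | ∃ ℓ ∈ L, C = {(y, false), ℓ}} ∪
            {C | ∃ γ ∈ Γ, C = insert (y, true) γ},
        ∃ l ∈ C, τ l.1 = l.2) :=
  stmt_13_general F L Γ y hsub hyF hyL
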